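/- Suppose Alice prepares a qubit in a basis state of one of three pairwise mutually unbiased bases of ℂ², with arbitrary prior probability distributions {p_i^(m)} on the two basis states of each basis, and Bob measures with an arbitrary POVM. Writing p_1^(m) = max_i p_i^(m) for the larger prior probability in the m-th basis, the mutual information satisfies I_1/(2 p_1^(1)) + I_2/(2 p_1^(2)) + I_3/(2 p_1^(3)) ≤ 1. -/

import Mathlib

open scoped BigOperators ComplexOrder
open Matrix

noncomputable section

/-- Shannon entropy (in bits) of a finitely-indexed probability vector. -/
def shannonEntropy {ι : Type*} [Fintype ι] (q : ι → ℝ) : ℝ :=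
  -∑ i, q i * Real.logb 2 (q i)

/-- Born probability ⟨v|M|v⟩ of POVM element `M` on the (unit vector) state `v`. -/
def outProb {d : ℕ} (M : Matrix (Fin d) (Fin d) ℂ) (v : Fin d → ℂ) : ℝ :=
  (star v ⬝ᵥ M.mulVec v).re

/-- A finite family of matrices is a POVM if each member is positive semidefinite
and they sum to the identity. -/
def IsPOVM {d : ℕ} {S : Type*} [Fintype S] (E : S → Matrix (Fin d) (Fin d) ℂ) : Prop :=
  (∀ s, (E s).PosSemidef) ∧ ∑ s, E s = 1

/-- `B` lists the vectors of an orthonormal basis of ℂ^d. -/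
def IsONB {d : ℕ} (B : Fin d → Fin d → ℂ) : Prop :=
  ∀ i j, star (B i) ⬝ᵥ B j = if i = j then 1 else 0

/-- Two bases of ℂ^d are mutually unbiased: all squared overlaps equal 1/d. -/
def AreMUB {d : ℕ} (B C : Fin d → Fin d → ℂ) : Prop :=
  ∀ i j, ‖star (B i) ⬝ᵥ C j‖ ^ 2 = 1 / d

/-- Mutual information (in bits) between Alice's input `i` (prior `p i`, state `B i`)
and Bob's POVM outcome `s`:  `I = H({p i}) - ∑ s p(s) H({p_{i|s}})`. -/
def mutInfo {d : ℕ} {S : Type*} [Fintype S] (B : Fin d → Fin d → ℂ) (p : Fin d → ℝ)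
    (E : S → Matrix (Fin d) (Fin d) ℂ) : ℝ :=
  shannonEntropy p -
    ∑ s, (∑ i, p i * outProb (E s) (B i)) *
      shannonEntropy (fun i =>
        p i * outProb (E s) (B i) / ∑ j, p j * outProb (E s) (B j))

/-!
Write `a_s(i) = ⟨i|M_s|i⟩` for the states of one basis. Because `∑_s a_s(i) = 1`, the mutual
information (in nats) is the sum over outcomes of the Jensen gaps
`η(∑ᵢ pᵢ a_s(i)) - ∑ᵢ pᵢ η(a_s(i))` of the concave function `η = negMulLog`. For a concave
function the gap at weights `(p, 1 - p)` is at most `2 max(p, 1 - p)` times the gap at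
`(1/2, 1/2)`, and for `η` the latter is at most `log 2 · (a₀ - a₁)² / (2 (a₀ + a₁))`, which is
the binary entropy bound `h(r) ≥ 4 r (1 - r)` (in bits). Hence
`I_m / (2 p₁⁽ᵐ⁾) ≤ ∑_s (a_s(0) - a_s(1))² / (2 tr M_s)`, where `a_s(0) - a_s(1) = tr (M_s σ_m)`
for `σ_m = |0_m⟩⟨0_m| - |1_m⟩⟨1_m|`. Mutual unbiasedness makes `1, σ₁, σ₂, σ₃` orthogonal for
the trace form, so Bessel's inequality together with `tr (M²) ≤ (tr M)²` for `M ≥ 0` gives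
`∑_m tr (M σ_m)² ≤ (tr M)²`, and `∑_s tr M_s / 2 = 1`.
-/

open Real

section Entropy

variable {ι S : Type*} [Fintype ι] [Fintype S]

lemma shannonEntropy_eq_sum_negMulLog (q : ι → ℝ) :
    shannonEntropy q = (∑ i, negMulLog (q i)) / log 2 := by
  simp only [shannonEntropy, negMulLog, logb, Finset.sum_div, ← Finset.sum_neg_distrib]
  congr 1 with i
  ring

lemma sum_mul_shannonEntropy_div_sum {x : ι → ℝ} (hx : ∀ i, 0 ≤ x i) :
    (∑ i, x i) * shannonEntropy (fun i => x i / ∑ j, x j)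
      = (∑ i, negMulLog (x i) - negMulLog (∑ i, x i)) / log 2 := by
  rcases (Finset.sum_nonneg fun i _ => hx i).eq_or_lt with h | h
  · have : ∀ i, x i = 0 := fun i =>
      (Finset.sum_eq_zero_iff_of_nonneg fun i _ => hx i).mp h.symm i (Finset.mem_univ i)
    simp [this]
  rw [shannonEntropy_eq_sum_negMulLog, mul_div_assoc', Finset.mul_sum]
  congr 1
  have hx' : ∀ i, x i = (x i / ∑ j, x j) * ∑ j, x j := fun i => by field_simp
  conv_rhs => rw [Finset.sum_congr rfl fun i _ => congrArg negMulLog (hx' i)]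
  simp only [negMulLog_mul, Finset.sum_add_distrib, ← Finset.sum_mul, ← Finset.sum_div,
    div_self h.ne', one_mul]
  ring

lemma shannonEntropy_sub_sum_mul_shannonEntropy_eq {p : ι → ℝ} {a : S → ι → ℝ}
    (hp : ∀ i, 0 ≤ p i) (ha : ∀ s i, 0 ≤ a s i) (ha₁ : ∀ i, ∑ s, a s i = 1) :
    shannonEntropy p - ∑ s, (∑ i, p i * a s i) *
        shannonEntropy (fun i => p i * a s i / ∑ j, p j * a s j)
      = (∑ s, (negMulLog (∑ i, p i * a s i) - ∑ i, p i * negMulLog (a s i))) / log 2 := by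
  rw [Finset.sum_congr rfl fun s _ =>
      sum_mul_shannonEntropy_div_sum fun i => mul_nonneg (hp i) (ha s i),
    shannonEntropy_eq_sum_negMulLog, ← Finset.sum_div, ← sub_div]
  congr 1
  simp only [negMulLog_mul, Finset.sum_add_distrib, Finset.sum_sub_distrib]
  rw [Finset.sum_comm (f := fun s i => a s i * negMulLog (p i))]
  simp only [← Finset.sum_mul, ha₁, one_mul]
  ring

end Entropy

section Concave

variable {E : Type*} [AddCommGroup E] [Module ℝ E] {s : Set E} {f : E → ℝ}

theorem ConcaveOn.sub_le_two_mul_sub_midpoint (hf : ConcaveOn ℝ s f) {x y : E} (hx : x ∈ s)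
    (hy : y ∈ s) {a : ℝ} (ha : 2⁻¹ ≤ a) (ha₁ : a ≤ 1) :
    f (a • x + (1 - a) • y) - (a * f x + (1 - a) * f y)
      ≤ 2 * a * (f ((2⁻¹ : ℝ) • (x + y)) - (f x + f y) / 2) := by
  have ha₀ : 0 < a := by linarith
  -- the midpoint is a convex combination of `a • x + (1 - a) • y` and `y`
  have hmid : (2⁻¹ : ℝ) • (x + y)
      = (2 * a)⁻¹ • (a • x + (1 - a) • y) + (1 - (2 * a)⁻¹) • y := by
    match_scalars
    · field_simp
    · field_simp
      ring
  have hmem : a • x + (1 - a) • y ∈ s := hf.1 hx hy ha₀.le (by linarith) (by ring)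
  have hconc := hf.2 hmem hy (by positivity : (0 : ℝ) ≤ (2 * a)⁻¹)
    (sub_nonneg.mpr (inv_le_one_of_one_le₀ (by linarith) : (2 * a)⁻¹ ≤ 1)) (by ring)
  rw [← hmid, smul_eq_mul, smul_eq_mul] at hconc
  have h2a : 2 * a * (2 * a)⁻¹ = 1 := by field_simp
  linear_combination (2 * a) * hconc + (f y - f (a • x + (1 - a) • y)) * h2a

theorem ConcaveOn.sub_le_two_mul_sub_midpoint_of_le (hf : ConcaveOn ℝ s f) {x y : E}
    (hx : x ∈ s) (hy : y ∈ s) {a b q : ℝ} (ha : 0 ≤ a) (hb : 0 ≤ b) (hab : a + b = 1)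
    (haq : a ≤ q) (hbq : b ≤ q) :
    f (a • x + b • y) - (a * f x + b * f y)
      ≤ 2 * q * (f ((2⁻¹ : ℝ) • (x + y)) - (f x + f y) / 2) := by
  have hmid : 0 ≤ f ((2⁻¹ : ℝ) • (x + y)) - (f x + f y) / 2 := by
    have := hf.2 hx hy (by norm_num : (0 : ℝ) ≤ 2⁻¹) (by norm_num : (0 : ℝ) ≤ 2⁻¹) (by norm_num)
    rw [smul_eq_mul, smul_eq_mul] at this
    rw [smul_add]
    linarith
  rcases le_total 2⁻¹ a with h | h
  · obtain rfl : b = 1 - a := by linarith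
    calc _ ≤ 2 * a * (f ((2⁻¹ : ℝ) • (x + y)) - (f x + f y) / 2) :=
          hf.sub_le_two_mul_sub_midpoint hx hy h (by linarith)
      _ ≤ _ := by gcongr
  · obtain rfl : a = 1 - b := by linarith
    calc _ = f (b • y + (1 - b) • x) - (b * f y + (1 - b) * f x) := by
          rw [add_comm (b • y)]; ring
      _ ≤ 2 * b * (f ((2⁻¹ : ℝ) • (y + x)) - (f y + f x) / 2) :=
          hf.sub_le_two_mul_sub_midpoint hy hx (by linarith) (by linarith)
      _ ≤ _ := by rw [add_comm y, add_comm (f y)]; gcongr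

end Concave

section BinEntropy

lemma hasDerivAt_binEntropy_sub_mul_one_sub {p : ℝ} (hp : p ∈ Set.Ioo 0 1) :
    HasDerivAt (fun p => binEntropy p - 4 * log 2 * (p * (1 - p)))
      (log (1 - p) - log p - 4 * log 2 * (1 - 2 * p)) p := by
  refine ((hasDerivAt_binEntropy hp.1.ne' hp.2.ne).sub
    (((hasDerivAt_id p).mul ((hasDerivAt_id p).const_sub 1)).const_mul (4 * log 2))).congr_deriv ?_
  simp only [id]
  ring

lemma hasDerivAt_log_one_sub_sub_log_sub {p : ℝ} (hp : p ∈ Set.Ioo 0 1) :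
    HasDerivAt (fun p => log (1 - p) - log p - 4 * log 2 * (1 - 2 * p))
      (8 * log 2 - 1 / (p * (1 - p))) p := by
  have h₀ : p ≠ 0 := hp.1.ne'
  have h₁ : 1 - p ≠ 0 := by linarith [hp.2]
  refine (((((hasDerivAt_id p).const_sub 1).log h₁).sub ((hasDerivAt_id p).log h₀)).sub
    (((hasDerivAt_id p).const_mul 2).const_sub 1 |>.const_mul (4 * log 2))).congr_deriv ?_
  simp only [id]
  field_simp
  ring

lemma exists_eight_mul_log_two_eq :
    ∃ c : ℝ, 0 < c ∧ c < 2⁻¹ ∧ 8 * log 2 = 1 / (c * (1 - c)) := by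
  have hl : 1 / 2 < log 2 := by linarith [log_two_gt_d9]
  have hr : 0 < 1 - 1 / (2 * log 2) := by
    rw [sub_pos, div_lt_one (by linarith)]
    linarith
  have hs₀ : 0 < √(1 - 1 / (2 * log 2)) := sqrt_pos.mpr hr
  have hs₁ : √(1 - 1 / (2 * log 2)) < 1 := by
    rw [sqrt_lt' one_pos]
    linarith [show 0 < 1 / (2 * log 2) by positivity]
  refine ⟨(1 - √(1 - 1 / (2 * log 2))) / 2, by linarith, by linarith, ?_⟩
  have hc : (1 - √(1 - 1 / (2 * log 2))) / 2 * (1 - (1 - √(1 - 1 / (2 * log 2))) / 2)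
      = (1 - √(1 - 1 / (2 * log 2)) ^ 2) / 4 := by ring
  rw [hc, sq_sqrt hr.le]
  field_simp
  ring

lemma four_mul_log_two_mul_le_binEntropy_of_le {c p : ℝ} (hc₀ : 0 < c)
    (hc : 1 / (c * (1 - c)) ≤ 8 * log 2) (hcp : c ≤ p) (hp : p ≤ 2⁻¹) :
    4 * log 2 * (p * (1 - p)) ≤ binEntropy p := by
  set f : ℝ → ℝ := fun p => binEntropy p - 4 * log 2 * (p * (1 - p))
  set g : ℝ → ℝ := fun p => log (1 - p) - log p - 4 * log 2 * (1 - 2 * p)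
  have hIoo : ∀ x ∈ Set.Icc c 2⁻¹, x ∈ Set.Ioo (0 : ℝ) 1 := fun x hx =>
    ⟨by linarith [hx.1], by linarith [hx.2]⟩
  have hg_mono : MonotoneOn g (Set.Icc c 2⁻¹) := by
    refine monotoneOn_of_hasDerivWithinAt_nonneg (convex_Icc _ _)
      (fun x hx => (hasDerivAt_log_one_sub_sub_log_sub (hIoo x hx)).continuousAt.continuousWithinAt)
      (fun x hx => (hasDerivAt_log_one_sub_sub_log_sub
        (hIoo x (interior_subset hx))).hasDerivWithinAt) fun x hx => ?_
    rw [interior_Icc] at hx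
    rw [sub_nonneg]
    refine le_trans (one_div_le_one_div_of_le (mul_pos hc₀ (by linarith [hx.2])) ?_) hc
    nlinarith [hx.1, hx.2]
  have hf_anti : AntitoneOn f (Set.Icc c 2⁻¹) := by
    refine antitoneOn_of_hasDerivWithinAt_nonpos (convex_Icc _ _) (by fun_prop)
      (fun x hx => (hasDerivAt_binEntropy_sub_mul_one_sub
        (hIoo x (interior_subset hx))).hasDerivWithinAt) fun x hx => ?_
    rw [interior_Icc] at hx
    calc g x ≤ g 2⁻¹ := hg_mono (Set.Ioo_subset_Icc_self hx) ⟨hcp.trans hp, le_rfl⟩ hx.2.le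
      _ = 0 := by norm_num [g]
  have := hf_anti ⟨hcp, hp⟩ ⟨hcp.trans hp, le_rfl⟩ hp
  simp only [f, binEntropy_two_inv] at this
  linarith

lemma four_mul_log_two_mul_le_binEntropy {p : ℝ} (h₀ : 0 ≤ p) (h₁ : p ≤ 1) :
    4 * log 2 * (p * (1 - p)) ≤ binEntropy p := by
  wlog hp : p ≤ 2⁻¹ generalizing p
  · simpa [mul_comm] using this (p := 1 - p) (by linarith) (by linarith) (by linarith)
  -- `c` is the inflection point of `binEntropy p - 4 * log 2 * (p * (1 - p))` in `(0, 1/2)`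
  obtain ⟨c, hc₀, hc₁, hc⟩ := exists_eight_mul_log_two_eq
  rcases le_total c p with hcp | hpc
  · exact four_mul_log_two_mul_le_binEntropy_of_le hc₀ hc.ge hcp hp
  have hIoo : ∀ x ∈ interior (Set.Icc 0 c), x ∈ Set.Ioo (0 : ℝ) 1 := fun x hx => by
    rw [interior_Icc] at hx
    exact ⟨hx.1, by linarith [hx.2]⟩
  have hconc : ConcaveOn ℝ (Set.Icc 0 c) fun p => binEntropy p - 4 * log 2 * (p * (1 - p)) := by
    refine concaveOn_of_hasDerivWithinAt2_nonpos (convex_Icc _ _) (by fun_prop)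
      (fun x hx => (hasDerivAt_binEntropy_sub_mul_one_sub (hIoo x hx)).hasDerivWithinAt)
      (fun x hx => (hasDerivAt_log_one_sub_sub_log_sub (hIoo x hx)).hasDerivWithinAt)
      fun x hx => ?_
    rw [interior_Icc] at hx
    rw [hc, sub_nonpos]
    exact one_div_le_one_div_of_le (by nlinarith [hx.1, hx.2]) (by nlinarith [hx.1, hx.2])
  have hc_nonneg := four_mul_log_two_mul_le_binEntropy_of_le hc₀ hc.ge le_rfl hc₁.le
  have := hconc.min_le_of_mem_Icc ⟨le_rfl, hc₀.le⟩ ⟨hc₀.le, le_rfl⟩ ⟨h₀, hpc⟩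
  simp only [binEntropy_zero, zero_mul, mul_zero, sub_zero] at this
  rw [min_eq_left (by linarith)] at this
  linarith

lemma negMulLog_midpoint_sub_le {a b : ℝ} (ha : 0 ≤ a) (hb : 0 ≤ b) :
    negMulLog (2⁻¹ * (a + b)) - (negMulLog a + negMulLog b) / 2
      ≤ log 2 * (a - b) ^ 2 / (2 * (a + b)) := by
  rcases (add_nonneg ha hb).eq_or_lt with hab | hab
  · obtain ⟨rfl, rfl⟩ : a = 0 ∧ b = 0 := ⟨by linarith, by linarith⟩
    simp
  have hsum : negMulLog a + negMulLog b
      = negMulLog (a + b) + (a + b) * binEntropy (a / (a + b)) := by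
    have e₀ := negMulLog_mul (a + b) (a / (a + b))
    have e₁ := negMulLog_mul (a + b) (1 - a / (a + b))
    rw [show (a + b) * (a / (a + b)) = a by field_simp] at e₀
    rw [show (a + b) * (1 - a / (a + b)) = b by field_simp; ring] at e₁
    rw [binEntropy_eq_negMulLog_add_negMulLog_one_sub, e₀, e₁]
    ring
  have hhalf : negMulLog (2⁻¹ * (a + b))
      = 2⁻¹ * negMulLog (a + b) + (a + b) * (2⁻¹ * log 2) := by
    rw [mul_comm, negMulLog_mul]
    simp [negMulLog, log_inv]
  have hbin := four_mul_log_two_mul_le_binEntropy (p := a / (a + b)) (by positivity)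
    (div_le_one_of_le₀ (by linarith) hab.le)
  rw [hsum, hhalf]
  calc 2⁻¹ * negMulLog (a + b) + (a + b) * (2⁻¹ * log 2)
        - (negMulLog (a + b) + (a + b) * binEntropy (a / (a + b))) / 2
      = (a + b) / 2 * (log 2 - binEntropy (a / (a + b))) := by ring
    _ ≤ (a + b) / 2 * (log 2 * (2 * (a / (a + b)) - 1) ^ 2) := by gcongr; nlinarith
    _ = log 2 * (a - b) ^ 2 / (2 * (a + b)) := by field_simp; ring

end BinEntropy

lemma sum_normSq_trace_mul_le {n ι : Type*} [Fintype n] [Fintype ι] [DecidableEq ι]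
    (M : Matrix n n ℂ) {σ : ι → Matrix n n ℂ} {c : ℝ} (hc : 0 < c)
    (hσ : ∀ i, (σ i).IsHermitian)
    (horth : ∀ i j, (σ i * σ j).trace = if i = j then (c : ℂ) else 0) :
    ∑ i, Complex.normSq (M * σ i).trace ≤ c * (M * Mᴴ).trace.re := by
  set z : ι → ℂ := fun i => (M * σ i).trace
  set X := M - ∑ i, (z i / c) • σ i
  have hX : 0 ≤ (X * Xᴴ).trace.re :=
    (Complex.le_def.mp (posSemidef_self_mul_conjTranspose X).trace_nonneg).1
  have hz : ∀ i, (σ i * Mᴴ).trace = star (z i) := fun i => by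
    rw [← (hσ i).eq, ← conjTranspose_mul, trace_conjTranspose]
  have hXX : (X * Xᴴ).trace = (M * Mᴴ).trace - ∑ i, (Complex.normSq (z i) / c : ℂ) := by
    simp only [X, conjTranspose_sub, conjTranspose_sum, conjTranspose_smul, (hσ _).eq, sub_mul,
      mul_sub, Finset.sum_mul, Finset.mul_sum, smul_mul_assoc, mul_smul_comm, trace_sub,
      trace_sum, trace_smul, horth, hz, smul_eq_mul]
    simp only [mul_ite, mul_zero, Finset.sum_ite_eq', Finset.mem_univ, if_true, sub_sub,
      ← Finset.sum_add_distrib]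
    congr 1
    refine Finset.sum_congr rfl fun i _ => ?_
    change _ + (_ * z i - _) = _
    rw [Complex.normSq_eq_conj_mul_self, star_div₀, Complex.star_def, Complex.conj_ofReal]
    field_simp
    ring
  rw [hXX, Complex.sub_re, Complex.re_sum] at hX
  simp only [← Complex.ofReal_div, Complex.ofReal_re, ← Finset.sum_div] at hX
  rw [sub_nonneg, div_le_iff₀ hc] at hX
  linarith

lemma Matrix.PosSemidef.re_trace_mul_self_le {M : Matrix (Fin 2) (Fin 2) ℂ}
    (hM : M.PosSemidef) : (M * M).trace.re ≤ M.trace.re ^ 2 := by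
  have h : (M * M).trace = M.trace ^ 2 - 2 * M.det := by
    simp only [trace_fin_two, det_fin_two, mul_apply, Fin.sum_univ_two]
    ring
  have htr := Complex.le_def.mp hM.trace_nonneg
  have hdet := Complex.le_def.mp hM.det_nonneg
  simp only [Complex.zero_re, Complex.zero_im] at htr hdet
  have h2 : (2 * M.det).re = 2 * M.det.re := by simp
  rw [h, Complex.sub_re, sq, Complex.mul_re, ← htr.2, h2]
  nlinarith

section Measurement

variable {d : ℕ}

lemma outProb_eq_re_trace (M : Matrix (Fin d) (Fin d) ℂ) (v : Fin d → ℂ) :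
    outProb M v = (M * vecMulVec v (star v)).trace.re := by
  rw [mul_vecMulVec, trace_vecMulVec, dotProduct_comm]
  rfl

lemma outProb_nonneg {M : Matrix (Fin d) (Fin d) ℂ} (hM : M.PosSemidef) (v : Fin d → ℂ) :
    0 ≤ outProb M v :=
  (Complex.le_def.mp (hM.dotProduct_mulVec_nonneg v)).1

lemma IsPOVM.sum_outProb {S : Type*} [Fintype S] {E : S → Matrix (Fin d) (Fin d) ℂ}
    (hE : IsPOVM E) {v : Fin d → ℂ} (hv : star v ⬝ᵥ v = 1) : ∑ s, outProb (E s) v = 1 := by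
  simp only [outProb_eq_re_trace, ← Complex.re_sum, ← trace_sum, ← Finset.sum_mul, hE.2,
    one_mul, trace_vecMulVec, dotProduct_comm v, hv, Complex.one_re]

lemma IsONB.sum_vecMulVec {B : Fin d → Fin d → ℂ} (hB : IsONB B) :
    ∑ i, vecMulVec (B i) (star (B i)) = 1 := by
  have h : (Matrix.of B).map star * (Matrix.of B)ᵀ = 1 := by
    ext i j
    simpa [mul_apply, one_apply, dotProduct] using hB i j
  rw [← mul_eq_one_comm.mp h]
  ext k l
  simp [mul_apply, vecMulVec_apply, Matrix.sum_apply]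

lemma IsONB.sum_outProb {B : Fin d → Fin d → ℂ} (hB : IsONB B) (M : Matrix (Fin d) (Fin d) ℂ) :
    ∑ i, outProb M (B i) = M.trace.re := by
  simp only [outProb_eq_re_trace, ← Complex.re_sum, ← trace_sum, ← Finset.mul_sum,
    hB.sum_vecMulVec, mul_one]

lemma trace_vecMulVec_mul_vecMulVec (u w : Fin d → ℂ) :
    (vecMulVec u (star u) * vecMulVec w (star w)).trace = Complex.normSq (star u ⬝ᵥ w) := by
  have h : star w ⬝ᵥ u = star (star u ⬝ᵥ w) := star_dotProduct w u
  rw [vecMulVec_mul_vecMulVec, trace_vecMulVec, dotProduct_smul, smul_eq_mul, dotProduct_comm u,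
    h, Complex.normSq_eq_conj_mul_self, Complex.star_def, mul_comm]

def basisObservable (B : Fin 2 → Fin d → ℂ) : Matrix (Fin d) (Fin d) ℂ :=
  vecMulVec (B 0) (star (B 0)) - vecMulVec (B 1) (star (B 1))

lemma isHermitian_basisObservable (B : Fin 2 → Fin d → ℂ) : (basisObservable B).IsHermitian := by
  simp [IsHermitian, basisObservable, conjTranspose_vecMulVec]

lemma re_trace_mul_basisObservable (M : Matrix (Fin d) (Fin d) ℂ) (B : Fin 2 → Fin d → ℂ) :
    (M * basisObservable B).trace.re = outProb M (B 0) - outProb M (B 1) := by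
  rw [basisObservable, mul_sub, trace_sub, Complex.sub_re, outProb_eq_re_trace,
    outProb_eq_re_trace]

lemma trace_basisObservable_mul_basisObservable (B C : Fin 2 → Fin d → ℂ) :
    (basisObservable B * basisObservable C).trace
      = ((Complex.normSq (star (B 0) ⬝ᵥ C 0) - Complex.normSq (star (B 0) ⬝ᵥ C 1)
          - Complex.normSq (star (B 1) ⬝ᵥ C 0) + Complex.normSq (star (B 1) ⬝ᵥ C 1) : ℝ) : ℂ) := by
  simp only [basisObservable, sub_mul, mul_sub, trace_sub, trace_vecMulVec_mul_vecMulVec]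
  push_cast
  ring

end Measurement

lemma IsONB.trace_basisObservable {B : Fin 2 → Fin 2 → ℂ} (hB : IsONB B) :
    (basisObservable B).trace = 0 := by
  rw [basisObservable, trace_sub, trace_vecMulVec, trace_vecMulVec, dotProduct_comm (B 0),
    dotProduct_comm (B 1), hB 0 0, hB 1 1]
  simp

lemma IsONB.trace_basisObservable_mul_self {B : Fin 2 → Fin 2 → ℂ} (hB : IsONB B) :
    (basisObservable B * basisObservable B).trace = 2 := by
  rw [trace_basisObservable_mul_basisObservable, hB 0 0, hB 0 1, hB 1 0, hB 1 1]
  norm_num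

lemma AreMUB.trace_basisObservable_mul {B C : Fin 2 → Fin 2 → ℂ} (h : AreMUB B C) :
    (basisObservable B * basisObservable C).trace = 0 := by
  have hn : ∀ i j, Complex.normSq (star (B i) ⬝ᵥ C j) = 2⁻¹ := fun i j => by
    rw [← Complex.sq_norm, h i j]
    norm_num
  rw [trace_basisObservable_mul_basisObservable, hn, hn, hn, hn]
  norm_num

lemma sum_sq_outProb_sub_le {B₁ B₂ B₃ : Fin 2 → Fin 2 → ℂ}
    (hB₁ : IsONB B₁) (hB₂ : IsONB B₂) (hB₃ : IsONB B₃)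
    (h12 : AreMUB B₁ B₂) (h13 : AreMUB B₁ B₃) (h23 : AreMUB B₂ B₃)
    {M : Matrix (Fin 2) (Fin 2) ℂ} (hM : M.PosSemidef) :
    (outProb M (B₁ 0) - outProb M (B₁ 1)) ^ 2 + (outProb M (B₂ 0) - outProb M (B₂ 1)) ^ 2
      + (outProb M (B₃ 0) - outProb M (B₃ 1)) ^ 2 ≤ M.trace.re ^ 2 := by
  set σ : Fin 4 → Matrix (Fin 2) (Fin 2) ℂ :=
    ![1, basisObservable B₁, basisObservable B₂, basisObservable B₃]
  have hσ : ∀ i, (σ i).IsHermitian := by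
    intro i
    fin_cases i
    exacts [isHermitian_one, isHermitian_basisObservable _, isHermitian_basisObservable _,
      isHermitian_basisObservable _]
  have horth : ∀ i j, (σ i * σ j).trace = if i = j then ((2 : ℝ) : ℂ) else 0 := by
    intro i j
    fin_cases i <;> fin_cases j <;>
      simp [σ, hB₁.trace_basisObservable, hB₂.trace_basisObservable, hB₃.trace_basisObservable,
        hB₁.trace_basisObservable_mul_self, hB₂.trace_basisObservable_mul_self,
        hB₃.trace_basisObservable_mul_self, h12.trace_basisObservable_mul,
        h13.trace_basisObservable_mul, h23.trace_basisObservable_mul,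
        trace_mul_comm (basisObservable B₂) (basisObservable B₁),
        trace_mul_comm (basisObservable B₃) (basisObservable B₁),
        trace_mul_comm (basisObservable B₃) (basisObservable B₂)]
  have hbessel := sum_normSq_trace_mul_le M two_pos hσ horth
  simp only [σ, Fin.sum_univ_four, cons_val_zero, cons_val_one, cons_val_two, cons_val_three,
    head_cons, tail_cons, mul_one, hM.isHermitian.eq] at hbessel
  have hre : ∀ z : ℂ, z.re ^ 2 ≤ Complex.normSq z := fun z => by
    rw [sq]
    exact Complex.re_sq_le_normSq z
  have h₁ := hre (M * basisObservable B₁).trace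
  have h₂ := hre (M * basisObservable B₂).trace
  have h₃ := hre (M * basisObservable B₃).trace
  simp only [re_trace_mul_basisObservable] at h₁ h₂ h₃
  linarith [hre M.trace, hM.re_trace_mul_self_le]

lemma mutInfo_div_two_mul_le {S : Type*} [Fintype S] {B : Fin 2 → Fin 2 → ℂ} (hB : IsONB B)
    {p : Fin 2 → ℝ} (hp : ∀ i, 0 ≤ p i) (hp₁ : ∑ i, p i = 1) {q : ℝ}
    (hq : IsGreatest (Set.range p) q) {E : S → Matrix (Fin 2) (Fin 2) ℂ} (hE : IsPOVM E) :
    mutInfo B p E / (2 * q)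
      ≤ ∑ s, (outProb (E s) (B 0) - outProb (E s) (B 1)) ^ 2 / (2 * (E s).trace.re) := by
  have hq₀ : p 0 ≤ q := hq.2 ⟨0, rfl⟩
  have hq₁ : p 1 ≤ q := hq.2 ⟨1, rfl⟩
  have hp01 : p 0 + p 1 = 1 := by simpa [Fin.sum_univ_two] using hp₁
  have hq_pos : 0 < q := by linarith [hp 0, hp 1]
  have ha : ∀ s i, 0 ≤ outProb (E s) (B i) := fun s i => outProb_nonneg (hE.1 s) _
  have hI : mutInfo B p E = _ := shannonEntropy_sub_sum_mul_shannonEntropy_eq hp ha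
    fun i => hE.sum_outProb (by simpa using hB i i)
  rw [div_le_iff₀ (by positivity), hI, div_le_iff₀ (log_pos one_lt_two),
    Finset.sum_mul, Finset.sum_mul]
  gcongr with s
  rw [← hB.sum_outProb, Fin.sum_univ_two, Fin.sum_univ_two, Fin.sum_univ_two]
  have hgap := concaveOn_negMulLog.sub_le_two_mul_sub_midpoint_of_le (Set.mem_Ici.mpr (ha s 0))
    (Set.mem_Ici.mpr (ha s 1)) (hp 0) (hp 1) hp01 hq₀ hq₁
  simp only [smul_eq_mul] at hgap
  calc _ ≤ 2 * q * (log 2 * (outProb (E s) (B 0) - outProb (E s) (B 1)) ^ 2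
          / (2 * (outProb (E s) (B 0) + outProb (E s) (B 1)))) :=
        hgap.trans (mul_le_mul_of_nonneg_left (negMulLog_midpoint_sub_le (ha s 0) (ha s 1))
          (by positivity))
    _ = _ := by ring

/-- Three qubit MUBs, arbitrary priors: with `p₁⁽ᵐ⁾` the larger prior probability of the
m-th basis, `I₁/(2p₁⁽¹⁾) + I₂/(2p₁⁽²⁾) + I₃/(2p₁⁽³⁾) ≤ 1`. -/
theorem qubit_three_mub_weighted_bound
    {S : Type*} [Fintype S]
    (B₁ B₂ B₃ : Fin 2 → Fin 2 → ℂ)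
    (hB₁ : IsONB B₁) (hB₂ : IsONB B₂) (hB₃ : IsONB B₃)
    (h12 : AreMUB B₁ B₂) (h13 : AreMUB B₁ B₃) (h23 : AreMUB B₂ B₃)
    (p₁ p₂ p₃ : Fin 2 → ℝ)
    (hp₁ : ∀ i, 0 ≤ p₁ i) (hp₁sum : ∑ i, p₁ i = 1)
    (hp₂ : ∀ i, 0 ≤ p₂ i) (hp₂sum : ∑ i, p₂ i = 1)
    (hp₃ : ∀ i, 0 ≤ p₃ i) (hp₃sum : ∑ i, p₃ i = 1)
    (q₁ q₂ q₃ : ℝ)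
    (hq₁ : IsGreatest (Set.range p₁) q₁)
    (hq₂ : IsGreatest (Set.range p₂) q₂)
    (hq₃ : IsGreatest (Set.range p₃) q₃)
    (E : S → Matrix (Fin 2) (Fin 2) ℂ) (hE : IsPOVM E) :
    mutInfo B₁ p₁ E / (2 * q₁) + mutInfo B₂ p₂ E / (2 * q₂)
      + mutInfo B₃ p₃ E / (2 * q₃) ≤ 1 := by
  have htr : ∀ s, 0 ≤ (E s).trace.re := fun s => (Complex.le_def.mp (hE.1 s).trace_nonneg).1
  have hsum : ∑ s, (E s).trace.re / 2 = 1 := by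
    rw [← Finset.sum_div, ← Complex.re_sum, ← trace_sum, hE.2, trace_one]
    norm_num
  calc _ ≤ ∑ s, ((outProb (E s) (B₁ 0) - outProb (E s) (B₁ 1)) ^ 2
          + (outProb (E s) (B₂ 0) - outProb (E s) (B₂ 1)) ^ 2
          + (outProb (E s) (B₃ 0) - outProb (E s) (B₃ 1)) ^ 2) / (2 * (E s).trace.re) := by
        simp only [add_div, Finset.sum_add_distrib]
        gcongr
        exacts [mutInfo_div_two_mul_le hB₁ hp₁ hp₁sum hq₁ hE,
          mutInfo_div_two_mul_le hB₂ hp₂ hp₂sum hq₂ hE,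
          mutInfo_div_two_mul_le hB₃ hp₃ hp₃sum hq₃ hE]
    _ ≤ ∑ s, (E s).trace.re ^ 2 / (2 * (E s).trace.re) := by
        gcongr with s
        · exact mul_nonneg zero_le_two (htr s)
        · exact sum_sq_outProb_sub_le hB₁ hB₂ hB₃ h12 h13 h23 (hE.1 s)
    _ = 1 := by
        rw [← hsum]
        refine Finset.sum_congr rfl fun s _ => ?_
        rcases eq_or_ne (E s).trace.re 0 with h | h
        · simp [h]
        · field_simp
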